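/- Let n, d be positive integers, m, c integers with gcd(m, n) = 1 and gcd(c, d) = 1, and suppose q = m·d − n·c > 0. Let j, k be integers with −c·j + d·k = 1, and set r = −n·k + m·j. Then S(m, n) = S(c, d) + S(r, q) + n/(d·q) + d/(n·q) + q/(n·d) − 3. -/

import Mathlib

open scoped Classical
open Finset

/-- The sawtooth function `((x))`. -/
noncomputable def saw (x : ℝ) : ℝ :=
  if ∃ z : ℤ, (z : ℝ) = x then 0 else x - ⌊x⌋ - 1/2

/-- The classical Dedekind sum `s(m,n)`. -/
noncomputable def ded (m n : ℤ) : ℝ :=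
  ∑ k ∈ Finset.Icc (1 : ℤ) n, saw ((k : ℝ) / n) * saw ((m : ℝ) * k / n)

/-- The normalized Dedekind sum `S(m,n) = 12 s(m,n)`. -/
noncomputable def Sded (m n : ℤ) : ℝ := 12 * ded m n

/-!
For coprime `m, n` the sawtooth values at `k / n` and `m k / n` are affine in `k` and in the
residue `m k mod n`, so `s(m, n) = (∑ k (m k mod n)) / n² - (n - 1) / 4`. Writing
`m k mod n = m k - n ⌊m k / n⌋` and counting the lattice points below the diagonal of the
`n × m` rectangle in two ways gives Dedekind reciprocity
`S(m, n) + S(n, m) = (m² + n² + 1) / (m n) - 3`.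

Reciprocity is the case `d = 1` of the three-term relation. For `d ≥ 2` write `j = -e - d t` with
`0 < e < d`; then `c e + d k' = 1` for `k' = k + c t`, and with `f = n k' + m e` (so that
`d f = n + e q`) the relation for `(n, d)` follows from the relation for `(n, e)` and reciprocity
for `(d, e)` and `(q, f)`. This is a Euclidean descent on `d`.
-/

lemma saw_eq_ite (x : ℝ) : saw x = if Int.fract x = 0 then 0 else Int.fract x - 1 / 2 := by
  simp_rw [saw, ← Set.mem_range, ← Int.fract_eq_zero_iff, Int.self_sub_floor]

lemma saw_neg (x : ℝ) : saw (-x) = -saw x := by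
  simp only [saw_eq_ite, Int.fract_neg_eq_zero]
  split_ifs with hx
  · simp
  · rw [Int.fract_neg hx]; ring

lemma fract_intCast_div (a : ℤ) {n : ℤ} (hn : 0 < n) :
    Int.fract ((a : ℝ) / n) = ((a % n : ℤ) : ℝ) / n := by
  have hn' : (0 : ℝ) < n := by exact_mod_cast hn
  rw [Int.fract_eq_iff, div_lt_one hn']
  refine ⟨by have := Int.emod_nonneg a hn.ne'; positivity,
    by exact_mod_cast Int.emod_lt_of_pos a hn, a / n, ?_⟩
  rw [Int.emod_def]
  push_cast
  field_simp
  ring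

lemma saw_intCast_div (a : ℤ) {n : ℤ} (hn : 0 < n) :
    saw ((a : ℝ) / n) = if n ∣ a then 0 else ((a % n : ℤ) : ℝ) / n - 1 / 2 := by
  have hn' : (n : ℝ) ≠ 0 := by positivity
  simp only [saw_eq_ite, fract_intCast_div a hn, div_eq_zero_iff, hn', or_false, Int.cast_eq_zero,
    Int.dvd_iff_emod_eq_zero]

lemma saw_intCast_div_of_modEq {a b n : ℤ} (hn : 0 < n) (h : a ≡ b [ZMOD n]) :
    saw ((a : ℝ) / n) = saw ((b : ℝ) / n) := by
  simp only [saw_intCast_div _ hn, h.eq, h.dvd_iff]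

lemma sum_Ico_comp_mul_emod {M : Type*} [AddCommMonoid M] {u n : ℤ} (hn : 0 < n)
    (hu : IsCoprime u n) (g : ℤ → M) :
    ∑ k ∈ Ico 0 n, g (u * k % n) = ∑ k ∈ Ico 0 n, g k := by
  obtain ⟨v, w, hvw⟩ := hu
  have mem_Ico_emod (a : ℤ) : a % n ∈ Ico 0 n :=
    mem_Ico.2 ⟨Int.emod_nonneg a hn.ne', Int.emod_lt_of_pos a hn⟩
  have cancel (a b : ℤ) (hab : a * b ≡ 1 [ZMOD n]) (k : ℤ) (hk : k ∈ Ico 0 n) :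
      a * (b * k % n) % n = k := by
    have : a * (b * k % n) ≡ k [ZMOD n] := calc
      a * (b * k % n) ≡ a * (b * k) [ZMOD n] := (Int.mod_modEq _ _).mul_left a
      _ = a * b * k := by ring
      _ ≡ 1 * k [ZMOD n] := hab.mul_right k
      _ = k := one_mul k
    rw [this.eq, Int.emod_eq_of_lt (mem_Ico.1 hk).1 (mem_Ico.1 hk).2]
  have hvu : v * u ≡ 1 [ZMOD n] := Int.modEq_iff_dvd.2 ⟨w, by linear_combination -hvw⟩
  exact sum_nbij' (fun k => u * k % n) (fun k => v * k % n) (fun _ _ => mem_Ico_emod _)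
    (fun _ _ => mem_Ico_emod _) (cancel v u hvu) (cancel u v (by rwa [mul_comm])) fun _ _ => rfl

lemma sum_Ico_comp_mul_of_isCoprime {M : Type*} [AddCommMonoid M] {u n : ℤ} (hn : 0 < n)
    (hu : IsCoprime u n) {g : ℤ → M} (hg : ∀ a b, a ≡ b [ZMOD n] → g a = g b) :
    ∑ k ∈ Ico 0 n, g (u * k) = ∑ k ∈ Ico 0 n, g k := by
  rw [← sum_Ico_comp_mul_emod hn hu g]
  exact sum_congr rfl fun k _ => hg _ _ (Int.mod_modEq (u * k) n).symm

lemma ded_eq_sum_Ico (m : ℤ) {n : ℤ} (hn : 0 < n) :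
    ded m n = ∑ k ∈ Ico 0 n, saw ((k : ℝ) / n) * saw (((m * k : ℤ) : ℝ) / n) := by
  have hn' : (n : ℝ) ≠ 0 := by positivity
  rw [ded, ← zero_add 1, Icc_add_one_left_eq_Ioc, ← Ioo_insert_right hn, ← Ioo_insert_left hn,
    sum_insert (by simp), sum_insert (by simp)]
  simp [hn', saw_eq_ite]

lemma ded_congr_of_modEq {m m' n : ℤ} (h : m ≡ m' [ZMOD n]) : ded m n = ded m' n := by
  refine sum_congr rfl fun k hk => ?_
  have hn : 0 < n := by linarith [(mem_Icc.1 hk).1, (mem_Icc.1 hk).2]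
  simp only [← Int.cast_mul, saw_intCast_div_of_modEq hn (h.mul_right k)]

lemma ded_neg (m n : ℤ) : ded (-m) n = -ded m n := by
  rw [ded, ded, ← sum_neg_distrib]
  refine sum_congr rfl fun k _ => ?_
  rw [Int.cast_neg, neg_mul, neg_div, saw_neg, mul_neg]

lemma ded_one_right (m : ℤ) : ded m 1 = 0 := by
  simp [ded_eq_sum_Ico m one_pos, saw_eq_ite]

lemma ded_eq_of_mul_modEq_one {m m' n : ℤ} (hn : 0 < n) (h : m * m' ≡ 1 [ZMOD n]) :
    ded m n = ded m' n := by
  obtain ⟨t, ht⟩ := Int.modEq_iff_dvd.1 h.symm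
  have hm : IsCoprime m n := ⟨m', -t, by linear_combination ht⟩
  rw [ded_eq_sum_Ico m hn, ded_eq_sum_Ico m' hn, ← sum_Ico_comp_mul_of_isCoprime hn hm
    (g := fun k => saw ((k : ℝ) / n) * saw (((m' * k : ℤ) : ℝ) / n))]
  · refine sum_congr rfl fun k _ => ?_
    have hk : m' * (m * k) ≡ k [ZMOD n] := by
      simpa [mul_left_comm, mul_assoc] using h.mul_right k
    rw [mul_comm, saw_intCast_div_of_modEq hn hk]
  · intro a b hab
    simp only [saw_intCast_div_of_modEq hn hab, saw_intCast_div_of_modEq hn (hab.mul_left m')]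

lemma two_mul_sum_Ico_id {n : ℤ} (hn : 0 ≤ n) : 2 * ∑ k ∈ Ico 0 n, k = n * (n - 1) := by
  induction n, hn using Int.leInduction with
  | base => simp
  | succ n hn ih =>
    rw [← insert_Ico_right_eq_Ico_add_one hn, sum_insert (by simp), mul_add, ih]
    ring

lemma six_mul_sum_Ico_sq {n : ℤ} (hn : 0 ≤ n) :
    6 * ∑ k ∈ Ico 0 n, k ^ 2 = n * (n - 1) * (2 * n - 1) := by
  induction n, hn using Int.leInduction with
  | base => simp
  | succ n hn ih =>
    rw [← insert_Ico_right_eq_Ico_add_one hn, sum_insert (by simp), mul_add, ih]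
    ring

lemma saw_mul_saw_eq {m n k : ℤ} (hmn : IsCoprime m n) (hk : k ∈ Ico 0 n) :
    saw ((k : ℝ) / n) * saw (((m * k : ℤ) : ℝ) / n) =
      ((k * (m * k % n) : ℤ) : ℝ) / n ^ 2 - ((k + m * k % n : ℤ) : ℝ) / (2 * n) + 1 / 4
        - if k = 0 then 1 / 4 else 0 := by
  obtain ⟨hk0, hkn⟩ := mem_Ico.1 hk
  have hn : 0 < n := hk0.trans_lt hkn
  rcases hk0.eq_or_lt with rfl | hk0
  · simp [saw_eq_ite]
  have hndvd : ¬ n ∣ k := fun h => (Int.le_of_dvd hk0 h).not_gt hkn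
  have hndvd' : ¬ n ∣ m * k := fun h => hndvd (hmn.symm.dvd_of_dvd_mul_left h)
  rw [saw_intCast_div k hn, saw_intCast_div _ hn, if_neg hndvd, if_neg hndvd', if_neg hk0.ne',
    Int.emod_eq_of_lt hk0.le hkn]
  have : (n : ℝ) ≠ 0 := by positivity
  push_cast
  field_simp
  ring

lemma ded_eq_sum_mul_emod {m n : ℤ} (hn : 0 < n) (hmn : IsCoprime m n) :
    ded m n = ((∑ k ∈ Ico 0 n, k * (m * k % n) : ℤ) : ℝ) / n ^ 2 - (n - 1) / 4 := by
  rw [ded_eq_sum_Ico m hn, sum_congr rfl fun k hk => saw_mul_saw_eq hmn hk]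
  simp only [sum_sub_distrib, sum_add_distrib, ← sum_div, sum_const, sum_ite_eq',
    ← Int.cast_sum]
  have hcard : ((#(Ico 0 n) : ℕ) : ℝ) = n := by
    rw [Int.card_Ico, sub_zero]; exact_mod_cast Int.toNat_of_nonneg hn.le
  have hgauss : 2 * ((∑ k ∈ Ico 0 n, k : ℤ) : ℝ) = n * (n - 1) := by
    exact_mod_cast two_mul_sum_Ico_id hn.le
  rw [sum_Ico_comp_mul_emod hn hmn fun k => k, if_pos (by simp [hn]), nsmul_eq_mul, mul_one,
    hcard]
  have : (n : ℝ) ≠ 0 := by positivity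
  field_simp
  push_cast at hgauss ⊢
  linear_combination (-4 * (n : ℝ)) * hgauss

lemma Ico_one_filter_mul_lt_mul {m n k : ℤ} (hmn : IsCoprime m n) (hk : k ∈ Ico 0 n) :
    {j ∈ Ico 1 m | n * j < m * k} = Ico 1 (m * k / n + 1) := by
  obtain ⟨hk0, hkn⟩ := mem_Ico.1 hk
  have hn : 0 < n := hk0.trans_lt hkn
  ext j
  simp only [mem_filter, mem_Ico, Int.lt_add_one_iff, Int.le_ediv_iff_mul_le hn]
  constructor
  · rintro ⟨⟨hj1, -⟩, hj⟩
    exact ⟨hj1, by linarith⟩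
  · rintro ⟨hj1, hj⟩
    have hne : n * j ≠ m * k := by
      intro h
      have hk0 : k = 0 := by
        by_contra hk0
        exact (Int.le_of_dvd (by omega) (hmn.symm.dvd_of_dvd_mul_left ⟨j, h.symm⟩)).not_gt hkn
      subst hk0
      nlinarith
    refine ⟨⟨hj1, ?_⟩, lt_of_le_of_ne (by linarith) hne⟩
    nlinarith

lemma Ico_zero_filter_mul_lt_mul {m n j : ℤ} (hm : 0 < m) (hnj : 0 ≤ n * j) :
    {k ∈ Ico 0 n | n * j < m * k} = Ico (n * j / m + 1) n := by
  have hq0 := Int.ediv_nonneg hnj hm.le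
  ext k
  simp only [mem_filter, mem_Ico, Int.add_one_le_iff, Int.ediv_lt_iff_lt_mul hm, mul_comm m k]
  constructor
  · rintro ⟨⟨-, hkn⟩, hk⟩
    exact ⟨hk, hkn⟩
  · rintro ⟨hk, hkn⟩
    refine ⟨⟨?_, hkn⟩, hk⟩
    rw [← Int.ediv_lt_iff_lt_mul hm] at hk
    omega

lemma two_mul_sum_mul_ediv_add_sum_ediv {m n : ℤ} (hm : 0 < m) (hn : 0 < n)
    (hmn : IsCoprime m n) :
    2 * ∑ k ∈ Ico 0 n, k * (m * k / n) + ∑ j ∈ Ico 0 m, n * j / m * (n * j / m + 1)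
      = (m - 1) * n * (n - 1) := by
  have hrow (k) (hk : k ∈ Ico 0 n) :
      k * (m * k / n) = ∑ j ∈ Ico 1 m, if n * j < m * k then k else 0 := by
    have hq0 : 0 ≤ m * k / n := Int.ediv_nonneg (by nlinarith [(mem_Ico.1 hk).1]) hn.le
    rw [← sum_filter, Ico_one_filter_mul_lt_mul hmn hk, sum_const, Int.card_Ico,
      add_sub_cancel_right, nsmul_eq_mul, Int.toNat_of_nonneg hq0, mul_comm]
  have hcol (j) (hj : j ∈ Ico 1 m) :
      2 * ∑ k ∈ Ico 0 n, (if n * j < m * k then k else 0)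
        = n * (n - 1) - n * j / m * (n * j / m + 1) := by
    obtain ⟨hj1, hjm⟩ := mem_Ico.1 hj
    have hq0 : 0 ≤ n * j / m := Int.ediv_nonneg (by positivity) hm.le
    have hqn : n * j / m + 1 ≤ n :=
      Int.add_one_le_iff.2 ((Int.ediv_lt_iff_lt_mul hm).2 (by nlinarith))
    have hsplit :=
      sum_union (f := fun k : ℤ => k) (Ico_disjoint_Ico_consecutive 0 (n * j / m + 1) n)
    rw [Ico_union_Ico_eq_Ico (by omega) hqn] at hsplit
    rw [← sum_filter, Ico_zero_filter_mul_lt_mul hm (by positivity)]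
    linear_combination (2 : ℤ) * hsplit.symm + two_mul_sum_Ico_id hn.le
      - two_mul_sum_Ico_id (by omega : 0 ≤ n * j / m + 1)
  have hzero : ∑ j ∈ Ico 0 m, n * j / m * (n * j / m + 1)
      = ∑ j ∈ Ico 1 m, n * j / m * (n * j / m + 1) := by
    rw [← insert_Ico_add_one_left_eq_Ico hm, sum_insert (by simp)]
    simp
  rw [sum_congr rfl hrow, sum_comm, mul_sum, sum_congr rfl hcol, hzero, sum_sub_distrib,
    sum_const, Int.card_Ico, nsmul_eq_mul, Int.toNat_of_nonneg (by omega)]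
  ring

lemma sum_mul_emod_reciprocity {m n : ℤ} (hm : 0 < m) (hn : 0 < n) (hmn : IsCoprime m n) :
    12 * m ^ 2 * ∑ k ∈ Ico 0 n, k * (m * k % n)
        + 12 * n ^ 2 * ∑ j ∈ Ico 0 m, j * (n * j % m)
      = 3 * m ^ 2 * n ^ 2 * (m + n - 3) + m * n * (m ^ 2 + n ^ 2 + 1) := by
  have hA : ∑ k ∈ Ico 0 n, k * (m * k % n)
      = m * ∑ k ∈ Ico 0 n, k ^ 2 - n * ∑ k ∈ Ico 0 n, k * (m * k / n) := by
    rw [mul_sum, mul_sum, ← sum_sub_distrib]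
    exact sum_congr rfl fun k _ => by rw [Int.emod_def]; ring
  have hQ : m ^ 2 * ∑ j ∈ Ico 0 m, n * j / m * (n * j / m + 1)
      = n ^ 2 * ∑ j ∈ Ico 0 m, j ^ 2 - 2 * n * ∑ j ∈ Ico 0 m, j * (n * j % m)
        + ∑ j ∈ Ico 0 m, (n * j % m) ^ 2 + m * n * ∑ j ∈ Ico 0 m, j
        - m * ∑ j ∈ Ico 0 m, n * j % m := by
    simp only [mul_sum, ← sum_add_distrib, ← sum_sub_distrib]
    exact sum_congr rfl fun j _ => by rw [Int.emod_def]; ring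
  have hR1 := sum_Ico_comp_mul_emod hm hmn.symm fun j => j
  have hR2 := sum_Ico_comp_mul_emod hm hmn.symm fun j => j ^ 2
  linear_combination 12 * m ^ 2 * hA
    - 6 * m ^ 2 * n * two_mul_sum_mul_ediv_add_sum_ediv hm hn hmn + 6 * n * hQ
    - 6 * m * n * hR1 + 6 * n * hR2 + 2 * m ^ 3 * six_mul_sum_Ico_sq hn.le
    + (n ^ 3 + n) * six_mul_sum_Ico_sq hm.le + 3 * m * n * (n - 1) * two_mul_sum_Ico_id hm.le

lemma Sded_reciprocity {m n : ℤ} (hm : 0 < m) (hn : 0 < n) (hmn : IsCoprime m n) :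
    Sded m n + Sded n m = ((m : ℝ) ^ 2 + n ^ 2 + 1) / (m * n) - 3 := by
  have h : (_ : ℝ) = _ := congrArg (Int.cast : ℤ → ℝ) (sum_mul_emod_reciprocity hm hn hmn)
  have hm' : (m : ℝ) ≠ 0 := by positivity
  have hn' : (n : ℝ) ≠ 0 := by positivity
  rw [Sded, Sded, ded_eq_sum_mul_emod hn hmn, ded_eq_sum_mul_emod hm hmn.symm]
  push_cast at h ⊢
  field_simp
  linear_combination 4 * h

lemma exists_eq_add_mul_of_not_dvd {a d : ℤ} (hd : 0 < d) (ha : ¬ d ∣ a) :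
    ∃ e t, a = e + d * t ∧ 0 < e ∧ e < d :=
  ⟨a % d, a / d, (Int.emod_add_mul_ediv a d).symm,
    (Int.emod_nonneg a hd.ne').lt_of_ne' (mt Int.dvd_of_emod_eq_zero ha), Int.emod_lt_of_pos a hd⟩

lemma three_term_rational_identity {K : Type*} [Field K] {n d e f q : K} (hn : n ≠ 0)
    (hd : d ≠ 0) (he : e ≠ 0) (hf : f ≠ 0) (hq : q ≠ 0) (hdf : d * f = n + e * q) :
    (n ^ 2 + e ^ 2 + f ^ 2) / (n * e * f) - (d ^ 2 + e ^ 2 + 1) / (d * e)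
      + (q ^ 2 + f ^ 2 + 1) / (q * f) = (n ^ 2 + d ^ 2 + q ^ 2) / (n * d * q) := by
  field_simp
  -- the cleared numerator is a quadratic in `n` vanishing at `n = d f - e q`
  linear_combination (f * q * (d ^ 2 + e ^ 2 + 1) - d * e * (q ^ 2 + f ^ 2 + 1)
    - (d * q - e * f) * (n + d * f - e * q)) * hdf

lemma Sded_three_term_of_eq_one {n d m c q j k r : ℤ} (hn : 0 < n) (hm : IsCoprime m n)
    (hd : d = 1) (hq : q = m * d - n * c) (hqpos : 0 < q) (hjk : -c * j + d * k = 1)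
    (hr : r = -n * k + m * j) :
    Sded m n = Sded c d + Sded r q + ((n : ℝ) ^ 2 + d ^ 2 + q ^ 2) / (n * d * q) - 3 := by
  subst hd
  have hqn : IsCoprime q n := by
    obtain ⟨a, b, hab⟩ := hm
    exact ⟨a, b + a * c, by rw [hq]; linear_combination hab⟩
  have hmq : ded m n = ded q n :=
    ded_congr_of_modEq (Int.modEq_iff_dvd.2 ⟨-c, by rw [hq]; ring⟩)
  have hrn : ded r q = -ded n q := by
    rw [← ded_neg]
    exact ded_congr_of_modEq
      (Int.modEq_iff_dvd.2 ⟨-j, by rw [hr, hq]; linear_combination n * hjk⟩)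
  have hrec := Sded_reciprocity hqpos hn hqn
  rw [Sded, Sded] at hrec
  rw [Sded, Sded, Sded, ded_one_right, hmq, hrn]
  linear_combination hrec

theorem Sded_three_term {n d m c q j k r : ℤ} (hn : 0 < n) (hd : 0 < d) (hm : IsCoprime m n)
    (hq : q = m * d - n * c) (hqpos : 0 < q) (hjk : -c * j + d * k = 1)
    (hr : r = -n * k + m * j) :
    Sded m n = Sded c d + Sded r q + ((n : ℝ) ^ 2 + d ^ 2 + q ^ 2) / (n * d * q) - 3 := by
  rcases (show 1 ≤ d by omega).eq_or_lt with hd1 | hd1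
  · exact Sded_three_term_of_eq_one hn hm hd1.symm hq hqpos hjk hr
  have hdj : ¬ d ∣ -j := by
    rintro ⟨s, hs⟩
    have := Int.eq_one_of_mul_eq_one_right hd.le
      (by linear_combination hjk - c * hs : d * (c * s + k) = 1)
    omega
  obtain ⟨e, t, hjet, he0, hed⟩ := exists_eq_add_mul_of_not_dvd hd hdj
  obtain ⟨k', hk'_def⟩ : ∃ k', k' = k + c * t := ⟨_, rfl⟩
  have hk' : c * e + d * k' = 1 := by rw [hk'_def]; linear_combination hjk - c * hjet
  obtain ⟨f, hf⟩ : ∃ f, f = n * k' + m * e := ⟨_, rfl⟩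
  have hdf : d * f = n + e * q := by rw [hf, hq]; linear_combination n * hk'
  have hfpos : 0 < f := by nlinarith
  have hqf : IsCoprime q f := by
    obtain ⟨a, b, hab⟩ := hm
    exact ⟨a * k' - b * e, a * c + b * d, by
      rw [hq, hf]; linear_combination (d * k' + c * e) * hab + hk'⟩
  -- in the relation for the smaller denominator `e`, `f` and `q` play the roles of `q` and `r`
  have hstep := Sded_three_term (c := -k') (j := d) (k := c) (r := q) hn he0 hm
    (by rw [hf]; ring) hfpos (by linear_combination hk') (by rw [hq]; ring)
  have hrec₁ := Sded_reciprocity hd he0 ⟨k', c, by linear_combination hk'⟩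
  have hrec₂ := Sded_reciprocity hqpos hfpos hqf
  have hde : ded (-k') e = -ded d e := by
    rw [ded_neg, ded_eq_of_mul_modEq_one he0 (m' := d)
      (Int.modEq_iff_dvd.2 ⟨c, by linear_combination -hk'⟩)]
  have hec : ded e d = ded c d :=
    ded_eq_of_mul_modEq_one hd (Int.modEq_iff_dvd.2 ⟨k', by linear_combination -hk'⟩)
  have hfr : ded f q = -ded r q := by
    rw [← ded_neg]
    exact ded_congr_of_modEq
      (Int.modEq_iff_dvd.2 ⟨t, by rw [hr, hq, hf, hk'_def]; linear_combination m * hjet⟩)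
  simp only [Sded, hde, hec, hfr] at hstep hrec₁ hrec₂ ⊢
  have hrat := three_term_rational_identity (n := (n : ℝ)) (d := d) (e := e) (f := f) (q := q)
    (by positivity) (by positivity) (by positivity) (by positivity) (by positivity)
    (by exact_mod_cast hdf)
  linear_combination hstep - hrec₁ + hrec₂ + hrat
termination_by d.toNat
decreasing_by omega

theorem three_term_relation_general (n d : ℤ) (hn : 0 < n) (hd : 0 < d) (m c : ℤ)
    (hm : Int.gcd m n = 1)
    (q : ℤ) (hq : q = m * d - n * c) (hqpos : 0 < q)
    (j k : ℤ) (hjk : -c * j + d * k = 1) (r : ℤ) (hr : r = -n * k + m * j) :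
    Sded m n = Sded c d + Sded r q + (n : ℝ) / ((d : ℝ) * q) + (d : ℝ) / ((n : ℝ) * q)
      + (q : ℝ) / ((n : ℝ) * d) - 3 := by
  rw [Sded_three_term hn hd (Int.isCoprime_iff_gcd_eq_one.2 hm) hq hqpos hjk hr]
  have : (n : ℝ) ≠ 0 := by positivity
  have : (d : ℝ) ≠ 0 := by positivity
  have : (q : ℝ) ≠ 0 := by positivity
  field_simp
  ring

theorem three_term_relation (n d : ℤ) (hn : 0 < n) (hd : 0 < d) (m c : ℤ)
    (hm : Int.gcd m n = 1) (hc : Int.gcd c d = 1)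
    (q : ℤ) (hq : q = m * d - n * c) (hqpos : 0 < q)
    (j k : ℤ) (hjk : -c * j + d * k = 1) (r : ℤ) (hr : r = -n * k + m * j) :
    Sded m n = Sded c d + Sded r q + (n : ℝ) / ((d : ℝ) * q) + (d : ℝ) / ((n : ℝ) * q)
      + (q : ℝ) / ((n : ℝ) * d) - 3 :=
  three_term_relation_general n d hn hd m c hm q hq hqpos j k hjk r hr
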